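/- arXiv:math/0501276 — 8 statements merged into one kernel-verified Lean document; each statement's English description precedes it below -/
import Mathlib

section
/- Let G be a group whose center Z(G) is either trivial or cyclic of prime order. Then the following are equivalent: (I) Z(G) is trivial or Z(G) is not a direct factor of G; (II) every group homomorphism f : G → Z(G) satisfies f(Z(G)) = 1. -/
/-- If the center of `G` is trivial or cyclic of prime order, then
`Z(G)` is trivial or not a direct factor of `G` iff every homomorphism
`f : G → Z(G)` kills the center. -/
theorem stmt_0 {G : Type*} [Group G]
    (h : Subgroup.center G = ⊥ ∨
      ∃ p : ℕ, p.Prime ∧ Nat.card (Subgroup.center G) = p) :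
    (Subgroup.center G = ⊥ ∨ ¬ ∃ H : Subgroup G, IsCompl (Subgroup.center G) H) ↔
      ∀ f : G →* Subgroup.center G, ∀ z : G, z ∈ Subgroup.center G → f z = 1 := by
  set Z := Subgroup.center G with hZ
  constructor
  · rintro (hbot | hnc) f z hz
    · simp [hbot] at hz; simp [hz]
    · by_contra hfz
      -- Z has prime order (it's not trivial since f z ≠ 1 with z ∈ Z)
      obtain hbot | ⟨p, hp, hcard⟩ := h
      · exact hfz (by simp [hbot] at hz; simp [hz])
      have : Fact (Nat.card Z).Prime := ⟨hcard ▸ hp⟩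
      -- restriction of f to Z
      set g : Z →* Z := f.comp Z.subtype with hg
      have hgz : g ⟨z, hz⟩ ≠ 1 := hfz
      have hker : g.ker = ⊥ := by
        rcases g.ker.eq_bot_or_eq_top_of_prime_card with h' | h'
        · exact h'
        · exact absurd (by simp [h'] : (⟨z, hz⟩ : Z) ∈ g.ker) hgz
      have hrange : g.range = ⊤ := by
        rcases g.range.eq_bot_or_eq_top_of_prime_card with h' | h'
        · exact absurd ((Subgroup.mem_bot).mp (h' ▸ MonoidHom.mem_range.mpr ⟨⟨z, hz⟩, rfl⟩)) hgz
        · exact h'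
      refine hnc ⟨f.ker, ?_, ?_⟩
      · rw [disjoint_iff, eq_bot_iff]
        intro x ⟨hxZ, hxK⟩
        have : (⟨x, hxZ⟩ : Z) ∈ g.ker := by
          simpa [hg, MonoidHom.mem_ker] using hxK
        rw [hker, Subgroup.mem_bot] at this
        simpa using congrArg Subtype.val this
      · rw [codisjoint_iff, eq_top_iff]
        intro a _
        obtain ⟨w, hw⟩ : ∃ w : Z, g w = f a := by
          have := hrange ▸ Subgroup.mem_top (f a)
          exact MonoidHom.mem_range.mp this
        have hwa : (↑w)⁻¹ * a ∈ f.ker := by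
          simp [MonoidHom.mem_ker, ← hw, hg]
        have : a = ↑w * ((↑w)⁻¹ * a) := by group
        rw [this]
        exact Subgroup.mul_mem_sup w.2 hwa
  · intro hf
    obtain hbot | ⟨p, hp, hcard⟩ := h
    · exact Or.inl hbot
    right
    rintro ⟨H, hc⟩
    -- H is normal, since Z is central and Z ⊔ H = ⊤
    have hHn : H.Normal := by
      constructor
      intro n hn a
      have ha : a ∈ Z ⊔ H := by rw [hc.sup_eq_top]; trivial
      rw [← SetLike.mem_coe, Subgroup.normal_mul] at ha
      obtain ⟨z, hz, k, hk, rfl⟩ := ha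
      have hcomm : ∀ x : G, z * x = x * z := fun x =>
        (Subgroup.mem_center_iff.mp hz x).symm
      have : z * k * n * (z * k)⁻¹ = k * n * k⁻¹ := by
        rw [mul_inv_rev]
        calc z * k * n * (k⁻¹ * z⁻¹) = z * (k * n * k⁻¹) * z⁻¹ := by group
        _ = (k * n * k⁻¹) * z * z⁻¹ := by rw [hcomm]
        _ = k * n * k⁻¹ := by group
      rw [this]
      exact H.mul_mem (H.mul_mem hk hn) (H.inv_mem hk)
    -- the map Z →* G/H is bijective
    set q : G →* G ⧸ H := QuotientGroup.mk' H with hq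
    set e : Z →* G ⧸ H := q.comp Z.subtype with he
    have hinj : Function.Injective e := by
      rw [← MonoidHom.ker_eq_bot_iff, eq_bot_iff]
      rintro ⟨x, hx⟩ hxk
      have : x ∈ H := by
        simpa [he, hq, QuotientGroup.eq_one_iff] using hxk
      have : x ∈ Z ⊓ H := ⟨hx, this⟩
      rw [hc.inf_eq_bot, Subgroup.mem_bot] at this
      simpa using this
    have hsurj : Function.Surjective e := by
      intro y
      obtain ⟨a, rfl⟩ := QuotientGroup.mk'_surjective H y
      have ha : a ∈ Z ⊔ H := by rw [hc.sup_eq_top]; trivial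
      rw [← SetLike.mem_coe, Subgroup.normal_mul] at ha
      obtain ⟨z, hz, k, hk, rfl⟩ := ha
      refine ⟨⟨z, hz⟩, ?_⟩
      simp only [he, hq, MonoidHom.comp_apply, Subgroup.coe_subtype]
      rw [QuotientGroup.mk'_eq_mk' ]
      exact ⟨k, hk, rfl⟩
    let eq : Z ≃* G ⧸ H := MulEquiv.ofBijective e ⟨hinj, hsurj⟩
    set f : G →* Z := eq.symm.toMonoidHom.comp q with hf'
    -- pick a nontrivial element of Z
    have : Nontrivial Z := by
      have hfin : Finite Z := Nat.finite_of_card_ne_zero (by rw [hcard]; exact hp.ne_zero)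
      have : 1 < Nat.card Z := hcard ▸ hp.one_lt
      exact Finite.one_lt_card_iff_nontrivial.mp this
    obtain ⟨⟨z, hz⟩, hzne⟩ := exists_ne (1 : Z)
    have hfz : f z = ⟨z, hz⟩ := by
      have : q z = e ⟨z, hz⟩ := rfl
      simp only [hf', MonoidHom.comp_apply, this]
      exact eq.symm_apply_apply _
    have := hf f z hz
    rw [hfz] at this
    exact hzne this
end

section
/- Let G be a group and define, for f : G → Z(G) a homomorphism, the map f♭ : G → G by f♭(w) = w·f(w)⁻¹. Then f♭ is an endomorphism of G, and for two homomorphisms f, g : G → Z(G), the product f*g defined by (f*g)(w) = f(w)·g(w)·(f∘g)(w)⁻¹ is again a homomorphism G → Z(G), and (f*g)♭ = f♭ ∘ g♭. -/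
/-- `f♭(w) = w · f(w)⁻¹`. -/
def flatFun {G : Type*} [Group G] (f : G → Subgroup.center G) : G → G :=
  fun w => w * ((f w : G))⁻¹

/-- `(f*g)(w) = f(w) · g(w) · f(g(w))⁻¹`. -/
def starFun {G : Type*} [Group G] (f g : G → Subgroup.center G) :
    G → Subgroup.center G :=
  fun w => f w * g w * (f ((g w : G)))⁻¹

section FlatStar

open Subgroup
open scoped IsMulCommutative

variable {G : Type*} [Group G]

def flatHom (f : G →* center G) : G →* G where
  toFun := flatFun f
  map_one' := by simp [flatFun]
  map_mul' x y := by
    simp only [flatFun, map_mul, coe_mul, mul_inv_rev, ← coe_inv, mul_assoc]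
    rw [← mem_center_iff.mp (f x)⁻¹.2, mul_assoc]

theorem coe_flatHom (f : G →* center G) : ⇑(flatHom f) = flatFun f := rfl

/-- `f*g` is a homomorphism because `G →* Z(G)` is a commutative group under pointwise
multiplication. -/
def starHom (f g : G →* center G) : G →* center G :=
  f * g * (f.comp ((center G).subtype.comp g))⁻¹

theorem coe_starHom (f g : G →* center G) : ⇑(starHom f g) = starFun f g := by
  funext w
  simp [starHom, starFun]

theorem flatFun_starFun (f : G →* center G) (g : G → center G) :
    flatFun (starFun f g) = flatFun f ∘ flatFun g := by
  funext w
  have hf : f (flatFun g w) = f w * (f (g w))⁻¹ := by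
    rw [flatFun, map_mul, map_inv]
  change _ = flatFun g w * ((f (flatFun g w) : G))⁻¹
  rw [hf]
  simp only [flatFun, starFun, mul_assoc, ← coe_inv, ← coe_mul]
  congr 2
  simp only [mul_inv_rev, inv_inv, mul_assoc]
  exact mul_left_comm _ _ _

end FlatStar

/-- For homomorphisms `f, g : G → Z(G)`, the map `f♭` is an
endomorphism of `G`, the product `f*g` is again a homomorphism `G → Z(G)`, and
`(f*g)♭ = f♭ ∘ g♭`. -/
theorem stmt_1 {G : Type*} [Group G] (f g : G →* Subgroup.center G) :
    (∃ F : G →* G, ⇑F = flatFun ⇑f) ∧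
    (∃ P : G →* Subgroup.center G, ⇑P = starFun ⇑f ⇑g) ∧
    flatFun (starFun ⇑f ⇑g) = flatFun ⇑f ∘ flatFun ⇑g :=
  ⟨⟨flatHom f, coe_flatHom f⟩, ⟨starHom f g, coe_starHom f g⟩, flatFun_starFun f g⟩
end

section
/- Let G be a group and f, g : G → Z(G) homomorphisms with f(Z(G)) = 1 and g(Z(G)) = 1. Then f and g are invertible in the monoid Hom(G,Z(G)) (with product (f*g)(w) = f(w)g(w)(f∘g)(w)⁻¹), the product satisfies (f*g)(w) = f(w)g(w) for all w ∈ G, f*g = g*f, and the map w ↦ f(w)⁻¹ is the inverse of f. -/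
/-!
The correction term `f(g(w))⁻¹` of the product evaluates `f` at a central element, so it is
trivial as soon as `f` kills the center; the product is then the pointwise product in the abelian
group `Z(G)`. Hence it is commutative, and the pointwise inverse `f⁻¹`, which again kills the
center, is a two-sided inverse of `f`.
-/

open scoped IsMulCommutative

namespace starFun

variable {G : Type*} [Group G]

theorem eq_mul_of_map_center {f : G →* Subgroup.center G}
    (hf : ∀ z ∈ Subgroup.center G, f z = 1) (g : G → Subgroup.center G) :
    starFun ⇑f g = fun w => f w * g w := by
  funext w
  simp [starFun, hf (g w) (g w).2]

theorem comm_of_map_center {f g : G →* Subgroup.center G}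
    (hf : ∀ z ∈ Subgroup.center G, f z = 1) (hg : ∀ z ∈ Subgroup.center G, g z = 1) :
    starFun ⇑f ⇑g = starFun ⇑g ⇑f := by
  rw [eq_mul_of_map_center hf, eq_mul_of_map_center hg]
  funext w
  exact mul_comm _ _

theorem inv_map_center {f : G →* Subgroup.center G}
    (hf : ∀ z ∈ Subgroup.center G, f z = 1) : ∀ z ∈ Subgroup.center G, f⁻¹ z = 1 := by
  intro z hz
  simp [hf z hz]

theorem mul_inv_of_map_center {f : G →* Subgroup.center G}
    (hf : ∀ z ∈ Subgroup.center G, f z = 1) : starFun ⇑f ⇑f⁻¹ = fun _ => 1 := by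
  rw [eq_mul_of_map_center hf]
  funext w
  exact mul_inv_cancel (f w)

theorem inv_mul_of_map_center {f : G →* Subgroup.center G}
    (hf : ∀ z ∈ Subgroup.center G, f z = 1) : starFun ⇑f⁻¹ ⇑f = fun _ => 1 := by
  rw [eq_mul_of_map_center (inv_map_center hf)]
  funext w
  exact inv_mul_cancel (f w)

end starFun

open starFun in
/-- If `f, g : G → Z(G)` are homomorphisms killing the center,
then `f` and `g` are invertible in the monoid `Hom(G, Z(G))`, the product
satisfies `(f*g)(w) = f(w)·g(w)` (hence `f*g = g*f`), and `w ↦ f(w)⁻¹` is the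
inverse of `f`. -/
theorem stmt_3 {G : Type*} [Group G] (f g : G →* Subgroup.center G)
    (hf : ∀ z ∈ Subgroup.center G, f z = 1) (hg : ∀ z ∈ Subgroup.center G, g z = 1) :
    (∃ f' : G →* Subgroup.center G,
        starFun ⇑f ⇑f' = (fun _ => 1) ∧ starFun ⇑f' ⇑f = (fun _ => 1)) ∧
    (∃ g' : G →* Subgroup.center G,
        starFun ⇑g ⇑g' = (fun _ => 1) ∧ starFun ⇑g' ⇑g = (fun _ => 1)) ∧
    (starFun ⇑f ⇑g = fun w => f w * g w) ∧
    starFun ⇑f ⇑g = starFun ⇑g ⇑f ∧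
    (∃ fi : G →* Subgroup.center G, (⇑fi = fun w => (f w)⁻¹) ∧
        starFun ⇑f ⇑fi = (fun _ => 1) ∧ starFun ⇑fi ⇑f = (fun _ => 1)) :=
  ⟨⟨f⁻¹, mul_inv_of_map_center hf, inv_mul_of_map_center hf⟩,
    ⟨g⁻¹, mul_inv_of_map_center hg, inv_mul_of_map_center hg⟩,
    eq_mul_of_map_center hf g, comm_of_map_center hf hg,
    ⟨f⁻¹, rfl, mul_inv_of_map_center hf, inv_mul_of_map_center hf⟩⟩
end

section
/- Let G₁ ≤ G₂ ≤ ⋯ and H₁ ≤ H₂ ≤ ⋯ be two increasing chains of subgroups of a group such that Gᵢ ∩ Hⱼ = Hᵢ for all i ≤ j. Put G = ⋃ᵢ Gᵢ and H = ⋃ᵢ Hᵢ. Then the normal core of H in G is contained in ⋃ᵢ Core_{Gᵢ}(Hᵢ). -/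
/-- The core `Core_G(H) = ⋂_{w ∈ G} w H w⁻¹` of a subgroup `H` relative to a
subgroup `G` of an ambient group, as a set. -/
def coreIn {K : Type*} [Group K] (G H : Subgroup K) : Set K :=
  ⋂ w ∈ G, (fun x => w * x * w⁻¹) '' (H : Set K)

/-- For increasing chains `G₁ ≤ G₂ ≤ ⋯`, `H₁ ≤ H₂ ≤ ⋯` of
subgroups of a group with `Gᵢ ∩ Hⱼ = Hᵢ` for `i ≤ j`, the core of
`H = ⋃ᵢ Hᵢ` in `G = ⋃ᵢ Gᵢ` is contained in `⋃ᵢ Core_{Gᵢ}(Hᵢ)`. -/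
theorem stmt_5 {K : Type*} [Group K] (G H : ℕ → Subgroup K)
    (hG : Monotone G) (hH : Monotone H)
    (hGH : ∀ i j, i ≤ j → G i ⊓ H j = H i) :
    coreIn (⨆ i, G i) (⨆ i, H i) ⊆ ⋃ i, coreIn (G i) (H i) := by
  intro x hx
  -- From the core condition: for every w in ⨆ G, w⁻¹ x w ∈ ⨆ H.
  have key : ∀ w ∈ (⨆ i, G i), w⁻¹ * x * w ∈ (⨆ i, H i) := by
    intro w hw
    obtain ⟨h, hh, he⟩ := Set.mem_iInter₂.mp hx w hw
    have : w⁻¹ * x * w = h := by rw [← he]; group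
    rw [this]; exact hh
  -- Take w = 1 to get x ∈ ⨆ H.
  have hxH : x ∈ (⨆ i, H i) := by
    have := key 1 (Subgroup.one_mem _)
    simpa using this
  obtain ⟨i₀, hxi₀⟩ := (Subgroup.mem_iSup_of_directed hH.directed_le).mp hxH
  have hxG : x ∈ G i₀ := by
    rw [← hGH i₀ i₀ le_rfl] at hxi₀; exact hxi₀.1
  refine Set.mem_iUnion.mpr ⟨i₀, Set.mem_iInter₂.mpr ?_⟩
  intro w hw
  have hwG : w ∈ (⨆ i, G i) := Subgroup.mem_iSup_of_mem i₀ hw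
  have hmem := key w hwG
  obtain ⟨j, hj⟩ := (Subgroup.mem_iSup_of_directed hH.directed_le).mp hmem
  have hjk : w⁻¹ * x * w ∈ H (max i₀ j) := hH (le_max_right i₀ j) hj
  have hGmem : w⁻¹ * x * w ∈ G i₀ :=
    mul_mem (mul_mem (inv_mem hw) hxG) hw
  have hHi₀ : w⁻¹ * x * w ∈ H i₀ := by
    rw [← hGH i₀ (max i₀ j) (le_max_left _ _)]
    exact ⟨hGmem, hjk⟩
  exact ⟨w⁻¹ * x * w, hHi₀, by group⟩
end

section
/- Let (W,S) be a Coxeter system with simple roots Π = {α_s} in the standard geometric representation. If w ∈ W, I, J ⊆ S are such that I ∩ J = ∅, w·Π_I = Π_I, and w·α_s is a negative root for every s ∈ J, then the set of positive roots in Φ_{I∪J} sent by w to negative roots is exactly Φ⁺_{I∪J} ∖ Φ_I. -/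
/-!
Every root is either nonnegative or nonpositive (Humphreys, Theorem 5.4). Since `w` permutes
`Π_I`, it maps `span Π_I` onto itself and sends nonnegative vectors there to nonnegative ones;
so a positive root of `Φ_I` cannot become negative. Conversely, split a positive root
`γ ∈ Φ_{I ∪ J} ∖ Φ_I` as `γ_I + γ_J` by support. Then `w γ_I ∈ span Π_I`, while `w γ_J` is
nonpositive and, as `γ_J ∉ span Π_I`, not in `span Π_I`. Hence `w γ` has a negative coordinate
outside `I`, and `w γ` is a negative root.
-/

open Real

/-- The standard bilinear form of a Coxeter matrix on `B →₀ ℝ`: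
`⟨α_s, α_t⟩ = -cos (π / m(s,t))`, interpreted as `-1` when `m(s,t) = ∞`
(encoded as `0`). -/
noncomputable def cForm {B : Type*} (M : CoxeterMatrix B) (v w : B →₀ ℝ) : ℝ :=
  v.sum fun s c => w.sum fun t d =>
    c * d * (if M s t = 0 then -1 else -Real.cos (Real.pi / (M s t : ℝ)))

/-- The simple root `α_s` as a basis vector of `B →₀ ℝ`. -/
noncomputable def simpleRoot {B : Type*} (s : B) : B →₀ ℝ := Finsupp.single s 1

/-- The root system `Φ = W · Π`. -/
def rootSet {B W : Type*} [Group W] {M : CoxeterMatrix B} (_ : CoxeterSystem M W)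
    (ρ : W →* ((B →₀ ℝ) ≃ₗ[ℝ] (B →₀ ℝ))) : Set (B →₀ ℝ) :=
  {v | ∃ (w : W) (s : B), v = ρ w (simpleRoot s)}

open CoxeterSystem Polynomial.Chebyshev

namespace Polynomial.Chebyshev

theorem U_eval_cos_nonneg {θ : ℝ} {n : ℤ} (hn : -1 ≤ n) (hθ : 0 ≤ θ) (hnθ : (n + 1) * θ ≤ π) :
    0 ≤ (U ℝ n).eval (cos θ) := by
  obtain rfl | rfl | hn1 : n = -1 ∨ n = 0 ∨ 1 ≤ n := by omega
  · simp
  · simp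
  obtain rfl | hθ0 := hθ.eq_or_lt
  · rw [cos_zero, U_eval_one]
    linarith [show (1 : ℝ) ≤ n by exact_mod_cast hn1]
  have h2θ : 2 * θ ≤ π := by nlinarith [show (1 : ℝ) ≤ n by exact_mod_cast hn1]
  have hsin : 0 < sin θ := sin_pos_of_pos_of_lt_pi hθ0 (by linarith)
  refine nonneg_of_mul_nonneg_left ?_ hsin
  rw [U_real_cos]
  exact sin_nonneg_of_nonneg_of_le_pi (by positivity) hnθ

end Polynomial.Chebyshev

-- `m(a,b) = ∞` is encoded as `0`, and then `π / 0 = 0` makes `-cos (π / m(a,b))` equal to `-1`.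
theorem cForm_simpleRoot_simpleRoot {B : Type*} (M : CoxeterMatrix B) (a b : B) :
    cForm M (simpleRoot a) (simpleRoot b) = -cos (π / M a b) := by
  by_cases h : M a b = 0 <;> simp [cForm, simpleRoot, h]

def IsGeometricRepresentation {B W : Type*} [Group W] {M : CoxeterMatrix B}
    (cs : CoxeterSystem M W) (ρ : W →* ((B →₀ ℝ) ≃ₗ[ℝ] (B →₀ ℝ))) : Prop :=
  ∀ (s : B) (v : B →₀ ℝ), ρ (cs.simple s) v = v - (2 * cForm M (simpleRoot s) v) • simpleRoot s

namespace IsGeometricRepresentation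

variable {B W : Type*} [Group W] {M : CoxeterMatrix B} {cs : CoxeterSystem M W}
  {ρ : W →* ((B →₀ ℝ) ≃ₗ[ℝ] (B →₀ ℝ))}

theorem simple_simpleRoot (hρ : IsGeometricRepresentation cs ρ) (a b : B) :
    ρ (cs.simple a) (simpleRoot b) = simpleRoot b + (2 * cos (π / M a b)) • simpleRoot a := by
  rw [hρ, cForm_simpleRoot_simpleRoot]
  module

theorem simple_simpleRoot_self (hρ : IsGeometricRepresentation cs ρ) (a : B) :
    ρ (cs.simple a) (simpleRoot a) = -simpleRoot a := by
  rw [hρ.simple_simpleRoot, M.diagonal]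
  norm_num
  module

theorem wordProd_alternatingWord_simpleRoot (hρ : IsGeometricRepresentation cs ρ) (a b : B)
    (k : ℕ) :
    ρ (cs.wordProd (alternatingWord a b k)) (simpleRoot a) =
      if Even k then
        (U ℝ k).eval (cos (π / M a b)) • simpleRoot a +
          (U ℝ (k - 1)).eval (cos (π / M a b)) • simpleRoot b
      else
        (U ℝ (k - 1)).eval (cos (π / M a b)) • simpleRoot a +
          (U ℝ k).eval (cos (π / M a b)) • simpleRoot b := by
  induction k with
  | zero => simp [alternatingWord]
  | succ k ih =>
    rw [alternatingWord_succ', wordProd_cons, map_mul, LinearEquiv.mul_apply, ih]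
    simp only [Nat.even_add_one]
    split_ifs
    all_goals
      simp only [map_add, map_smul, hρ.simple_simpleRoot_self, hρ.simple_simpleRoot,
        M.symmetric b a]
      push_cast
      rw [add_sub_cancel_right, U_add_one]
      simp only [Polynomial.eval_sub, Polynomial.eval_mul, Polynomial.eval_X,
        Polynomial.eval_ofNat]
      module

theorem exists_nonneg_wordProd_alternatingWord_simpleRoot_eq
    (hρ : IsGeometricRepresentation cs ρ) {a b : B} {k : ℕ} (hk : M a b = 0 ∨ k < M a b) :
    ∃ p q : ℝ, 0 ≤ p ∧ 0 ≤ q ∧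
      ρ (cs.wordProd (alternatingWord a b k)) (simpleRoot a) =
        p • simpleRoot a + q • simpleRoot b := by
  have hU : ∀ n : ℤ, -1 ≤ n → n < k + 1 → 0 ≤ (U ℝ n).eval (cos (π / M a b)) := by
    intro n hn hnk
    refine U_eval_cos_nonneg hn (by positivity) ?_
    rcases hk with hM | hkM
    · simp [hM, pi_nonneg]
    · have hM : (0 : ℝ) < M a b := by exact_mod_cast k.zero_le.trans_lt hkM
      rw [mul_div_assoc', div_le_iff₀ hM, mul_comm]
      gcongr
      exact_mod_cast (show n + 1 ≤ (M a b : ℤ) by omega)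
  rw [hρ.wordProd_alternatingWord_simpleRoot]
  split_ifs
  exacts [⟨_, _, hU k (by omega) (by omega), hU (k - 1) (by omega) (by omega), rfl⟩,
    ⟨_, _, hU (k - 1) (by omega) (by omega), hU k (by omega) (by omega), rfl⟩]

end IsGeometricRepresentation

namespace CoxeterSystem

variable {B W : Type*} [Group W] {M : CoxeterMatrix B} (cs : CoxeterSystem M W)

theorem exists_wordProd_alternatingWord_mul_simple {c d x : B} (hx : x ∈ [c, d]) (k : ℕ) :
    ∃ j ≤ k + 1, cs.wordProd (alternatingWord c d k) * cs.simple x =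
        cs.wordProd (alternatingWord c d j) ∨
      cs.wordProd (alternatingWord c d k) * cs.simple x = cs.wordProd (alternatingWord d c j) := by
  obtain rfl | rfl : x = c ∨ x = d := by simpa using hx
  · refine ⟨k + 1, le_rfl, Or.inr ?_⟩
    rw [alternatingWord_succ, wordProd_concat]
  · cases k with
    | zero => exact ⟨1, le_rfl, Or.inl (by simp [alternatingWord])⟩
    | succ k =>
      refine ⟨k, by omega, Or.inr ?_⟩
      rw [alternatingWord_succ, wordProd_concat, simple_mul_simple_cancel_right]

theorem exists_wordProd_eq_alternatingWord {a b : B} {ω : List B} (hω : ω ⊆ [a, b]) :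
    ∃ k ≤ ω.length, cs.wordProd ω = cs.wordProd (alternatingWord a b k) ∨
      cs.wordProd ω = cs.wordProd (alternatingWord b a k) := by
  induction ω using List.reverseRecOn with
  | nil => exact ⟨0, le_rfl, Or.inl rfl⟩
  | append_singleton ω x ih =>
    have hx : x ∈ [a, b] := hω (by simp)
    obtain ⟨k, hk, h | h⟩ := ih (fun y hy => hω (by simp [hy]))
    · obtain ⟨j, hj, h'⟩ := cs.exists_wordProd_alternatingWord_mul_simple hx k
      exact ⟨j, by simp; omega, by rwa [wordProd_append, wordProd_singleton, h]⟩
    · obtain ⟨j, hj, h'⟩ := cs.exists_wordProd_alternatingWord_mul_simple (c := b) (d := a)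
        (by simpa [or_comm] using hx) k
      exact ⟨j, by simp; omega, by rw [wordProd_append, wordProd_singleton, h]; exact h'.symm⟩

theorem exists_wordProd_eq_alternatingWord_lt {a b : B} {ω : List B} (hω : ω ⊆ [a, b])
    (hred : cs.IsReduced ω)
    (ha : ¬cs.IsRightDescent (cs.wordProd ω) a) :
    ∃ k, (M a b = 0 ∨ k < M a b) ∧ cs.wordProd ω = cs.wordProd (alternatingWord a b k) := by
  obtain ⟨k, hk, h⟩ := cs.exists_wordProd_eq_alternatingWord hω
  have hlen : cs.length (cs.wordProd ω) = k := by
    have hωk : cs.length (cs.wordProd ω) ≤ k := by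
      rcases h with h | h <;> rw [h] <;>
        exact (cs.length_wordProd_le _).trans_eq (length_alternatingWord _ _ _)
    have : cs.length (cs.wordProd ω) = ω.length := hred
    omega
  have hend_a : ∀ {j}, cs.wordProd ω = cs.wordProd (alternatingWord b a (j + 1)) → j < k →
      False := by
    intro j hj hjk
    have hja : cs.wordProd ω * cs.simple a = cs.wordProd (alternatingWord a b j) := by
      rw [hj, alternatingWord_succ, wordProd_concat, simple_mul_simple_cancel_right]
    have := cs.length_wordProd_le (alternatingWord a b j)
    rw [length_alternatingWord] at this
    rw [not_isRightDescent_iff, hja, hlen] at ha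
    omega
  rcases h with h | h
  · refine ⟨k, ?_, h⟩
    by_contra! hMk
    have hred' : cs.IsReduced (alternatingWord a b k) := by
      simp [IsReduced, ← h, hlen]
    have hkM : k = M a b := by
      by_contra hne
      exact cs.not_isReduced_alternatingWord a b hMk.1 (by omega) hred'
    -- by the braid relation, an alternating word of length `m(a,b)` may as well end in `a`
    obtain ⟨j, hj⟩ := Nat.exists_eq_succ_of_ne_zero hMk.1
    have hbraid := cs.wordProd_braidWord_eq a b
    rw [braidWord, braidWord, M.symmetric b a, hj] at hbraid
    exact hend_a (by rw [h, hkM, hj, hbraid]) (by omega)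
  · obtain rfl : k = 0 := by
      by_contra hk0
      obtain ⟨j, rfl⟩ := Nat.exists_eq_succ_of_ne_zero hk0
      exact hend_a h (by omega)
    exact ⟨0, (M a b).eq_zero_or_pos, h⟩

theorem exists_eq_mul_wordProd_not_isRightDescent (K : Set B) (w : W) :
    ∃ (v : W) (ω : List B), (∀ x ∈ ω, x ∈ K) ∧ w = v * cs.wordProd ω ∧
      cs.length v + ω.length = cs.length w ∧ ∀ y ∈ K, ¬cs.IsRightDescent v y := by
  induction hn : cs.length w using Nat.strong_induction_on generalizing w with
  | _ n ih =>
  by_cases h : ∃ y ∈ K, cs.IsRightDescent w y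
  · obtain ⟨y, hyK, hy⟩ := h
    have hwy := cs.isRightDescent_iff.mp hy
    obtain ⟨v, ω, hωK, hw, hlen, hv⟩ := ih _ (by omega) (w * cs.simple y) rfl
    refine ⟨v, ω ++ [y], ?_, ?_, ?_, hv⟩
    · simpa [or_imp, forall_and] using ⟨hωK, hyK⟩
    · rw [wordProd_append, wordProd_singleton, ← mul_assoc, ← hw, simple_mul_simple_cancel_right]
    · simp only [List.length_append, List.length_singleton]
      omega
  · push Not at h
    exact ⟨w, [], by simp, by simp, by simp [hn], h⟩

end CoxeterSystem

namespace IsGeometricRepresentation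

variable {B W : Type*} [Group W] {M : CoxeterMatrix B} {cs : CoxeterSystem M W}
  {ρ : W →* ((B →₀ ℝ) ≃ₗ[ℝ] (B →₀ ℝ))}

-- Humphreys, Theorem 5.4: write `w = v ⬝ u` with `u` in the dihedral subgroup generated by `a`
-- and a right descent `t` of `w`, and `v` of minimal length; induction applies to `v`, and `u`
-- sends `α_a` into the cone spanned by `α_a, α_t`.
theorem simpleRoot_nonneg_of_not_isRightDescent (hρ : IsGeometricRepresentation cs ρ) {w : W}
    {a : B} (h : ¬cs.IsRightDescent w a) : 0 ≤ ρ w (simpleRoot a) := by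
  induction hn : cs.length w using Nat.strong_induction_on generalizing w a with
  | _ n ih =>
  rcases eq_or_ne w 1 with rfl | hw1
  · simp [simpleRoot]
  obtain ⟨t, ht⟩ := cs.exists_rightDescent_of_ne_one hw1
  obtain ⟨v, ω, hωK, rfl, hlen, hv⟩ := cs.exists_eq_mul_wordProd_not_isRightDescent {a, t} w
  have hω : ω ⊆ [a, t] := fun x hx => by simpa using hωK x hx
  have hvn : cs.length v < n := by
    have hω0 : ω ≠ [] := by
      rintro rfl
      exact hv t (by simp) (by simpa using ht)
    have := List.length_pos_of_ne_nil hω0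
    omega
  have hvω := cs.length_mul_le v (cs.wordProd ω)
  have hωω := cs.length_wordProd_le ω
  have hred : cs.IsReduced ω := show cs.length _ = _ by omega
  have hωa : ¬cs.IsRightDescent (cs.wordProd ω) a := by
    have := cs.length_mul_le v (cs.wordProd ω * cs.simple a)
    rw [cs.not_isRightDescent_iff, mul_assoc] at h
    rw [cs.not_isRightDescent_iff]
    have := cs.length_mul_simple (cs.wordProd ω) a
    omega
  obtain ⟨k, hk, hωk⟩ := cs.exists_wordProd_eq_alternatingWord_lt hω hred hωa
  obtain ⟨p, q, hp, hq, hpq⟩ := hρ.exists_nonneg_wordProd_alternatingWord_simpleRoot_eq hk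
  rw [map_mul, LinearEquiv.mul_apply, hωk, hpq, map_add, map_smul, map_smul]
  exact add_nonneg (smul_nonneg hp (ih _ hvn (hv a (by simp)) rfl))
    (smul_nonneg hq (ih _ hvn (hv t (by simp)) rfl))

theorem nonneg_or_nonpos_of_mem_rootSet (hρ : IsGeometricRepresentation cs ρ) {γ : B →₀ ℝ}
    (hγ : γ ∈ rootSet cs ρ) : 0 ≤ γ ∨ γ ≤ 0 := by
  obtain ⟨w, a, rfl⟩ := hγ
  by_cases h : cs.IsRightDescent w a
  · right
    rw [cs.isRightDescent_iff_not_isRightDescent_mul] at h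
    have hw : w = w * cs.simple a * cs.simple a := (cs.simple_mul_simple_cancel_right a).symm
    rw [hw, map_mul, LinearEquiv.mul_apply, hρ.simple_simpleRoot_self, map_neg, neg_nonpos]
    exact hρ.simpleRoot_nonneg_of_not_isRightDescent h
  · exact Or.inl (hρ.simpleRoot_nonneg_of_not_isRightDescent h)

end IsGeometricRepresentation

section Parabolic

open Finsupp

variable {B : Type*}

theorem apply_nonneg_of_forall_single_nonneg {R N : Type*} [Semiring R] [PartialOrder R]
    [AddCommMonoid N] [PartialOrder N] [IsOrderedAddMonoid N] [Module R N] [PosSMulMono R N]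
    (g : (B →₀ R) →ₗ[R] N) {v : B →₀ R} (hv : 0 ≤ v)
    (hg : ∀ i ∈ v.support, 0 ≤ g (single i 1)) : 0 ≤ g v := by
  rw [← v.sum_single, map_finsuppSum]
  refine sum_nonneg fun i hi => ?_
  rw [← smul_single_one, map_smul]
  exact smul_nonneg (hv i) (hg i hi)

variable {f : (B →₀ ℝ) ≃ₗ[ℝ] (B →₀ ℝ)} {I : Set B}

theorem map_supported_eq_of_image_simpleRoot
    (hI : (fun v => f v) '' (simpleRoot '' I) = simpleRoot '' I) :
    (supported ℝ ℝ I).map (f : (B →₀ ℝ) →ₗ[ℝ] (B →₀ ℝ)) = supported ℝ ℝ I := by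
  rw [supported_eq_span_single, Submodule.map_span]
  exact congrArg _ hI

theorem apply_mem_supported_iff_of_image_simpleRoot
    (hI : (fun v => f v) '' (simpleRoot '' I) = simpleRoot '' I) {v : B →₀ ℝ} :
    f v ∈ supported ℝ ℝ I ↔ v ∈ supported ℝ ℝ I := by
  conv_lhs => rw [← map_supported_eq_of_image_simpleRoot hI]
  rw [Submodule.mem_map_equiv, LinearEquiv.symm_apply_apply]

theorem apply_nonneg_of_image_simpleRoot
    (hI : (fun v => f v) '' (simpleRoot '' I) = simpleRoot '' I) {v : B →₀ ℝ} (hv : 0 ≤ v)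
    (hvI : v ∈ supported ℝ ℝ I) : 0 ≤ f v := by
  refine apply_nonneg_of_forall_single_nonneg (f : (B →₀ ℝ) →ₗ[ℝ] (B →₀ ℝ)) hv fun i hi => ?_
  obtain ⟨j, -, hj⟩ := hI.subset ⟨simpleRoot i, ⟨i, (mem_supported ℝ v).1 hvI hi, rfl⟩, rfl⟩
  change 0 ≤ f (simpleRoot i)
  rw [show f (simpleRoot i) = simpleRoot j from hj.symm]
  exact single_nonneg.2 zero_le_one

theorem not_nonneg_apply_of_notMem_supported
    (hI : (fun v => f v) '' (simpleRoot '' I) = simpleRoot '' I) {J : Set B}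
    (hJ : ∀ s ∈ J, f (simpleRoot s) ≤ 0) {v : B →₀ ℝ} (hv : 0 ≤ v)
    (hvIJ : v ∈ supported ℝ ℝ (I ∪ J)) (hv_notI : v ∉ supported ℝ ℝ I) : ¬0 ≤ f v := by
  classical
  intro hfv
  set vI := v.filter (· ∈ I)
  set vJ := v.filter (· ∉ I)
  have hvI : vI ∈ supported ℝ ℝ I :=
    (mem_supported' ℝ _).2 fun x hx => filter_apply_neg _ _ hx
  have hfvJ : f vJ ≤ 0 := by
    refine neg_nonneg.1 (apply_nonneg_of_forall_single_nonneg (-(f : (B →₀ ℝ) →ₗ[ℝ] (B →₀ ℝ)))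
      (fun x => ?_) fun i hi => ?_)
    · simp only [vJ, filter_apply]
      split_ifs
      exacts [le_rfl, hv x]
    · rw [mem_support_iff, filter_apply, ite_ne_right_iff] at hi
      have hiJ : i ∈ J :=
        ((mem_supported ℝ v).1 hvIJ (mem_support_iff.2 hi.2)).resolve_left hi.1
      exact neg_nonneg.2 (hJ i hiJ)
  have hfvJ_mem : f vJ ∈ supported ℝ ℝ I := by
    refine (mem_supported' ℝ _).2 fun x hx => le_antisymm (hfvJ x) ?_
    have := hfv x
    rwa [← filter_add_filter_not v (· ∈ I), map_add, Finsupp.add_apply,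
      (mem_supported' ℝ _).1 ((apply_mem_supported_iff_of_image_simpleRoot hI).2 hvI) x hx,
      zero_add] at this
  rw [← filter_add_filter_not v (· ∈ I)] at hv_notI
  exact hv_notI (add_mem hvI ((apply_mem_supported_iff_of_image_simpleRoot hI).1 hfvJ_mem))

end Parabolic

section rootSet

variable {B W : Type*} [Group W] {M : CoxeterMatrix B} {cs : CoxeterSystem M W}
  {ρ : W →* ((B →₀ ℝ) ≃ₗ[ℝ] (B →₀ ℝ))}

theorem ne_zero_of_mem_rootSet {γ : B →₀ ℝ} (hγ : γ ∈ rootSet cs ρ) : γ ≠ 0 := by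
  obtain ⟨w, s, rfl⟩ := hγ
  simp [simpleRoot]

theorem apply_mem_rootSet {γ : B →₀ ℝ} (hγ : γ ∈ rootSet cs ρ) (w : W) :
    ρ w γ ∈ rootSet cs ρ := by
  obtain ⟨w', s, rfl⟩ := hγ
  exact ⟨w * w', s, by rw [map_mul, LinearEquiv.mul_apply]⟩

end rootSet

theorem stmt_8_general {B W : Type*} [Group W] {M : CoxeterMatrix B} (cs : CoxeterSystem M W)
    (ρ : W →* ((B →₀ ℝ) ≃ₗ[ℝ] (B →₀ ℝ)))
    (hρ : ∀ (s : B) (v : B →₀ ℝ),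
      ρ (cs.simple s) v = v - (2 * cForm M (simpleRoot s) v) • simpleRoot s)
    (w : W) (I J : Set B)
    (hI : (fun v => ρ w v) '' (simpleRoot '' I) = simpleRoot '' I)
    (hJ : ∀ s ∈ J, ∀ t, (ρ w (simpleRoot s)) t ≤ 0) :
    {γ | γ ∈ rootSet cs ρ ∧ (∀ t, 0 ≤ γ t) ∧ (∀ t ∉ I ∪ J, γ t = 0) ∧
        ∀ t, (ρ w γ) t ≤ 0} =
      {γ | γ ∈ rootSet cs ρ ∧ (∀ t, 0 ≤ γ t) ∧ (∀ t ∉ I ∪ J, γ t = 0)} \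
        {γ | γ ∈ rootSet cs ρ ∧ ∀ t ∉ I, γ t = 0} := by
  ext γ
  simp only [Set.mem_ofPred_eq, Set.mem_sdiff, ← Finsupp.mem_supported' ℝ]
  constructor
  · rintro ⟨hroot, hpos, hIJ, hneg⟩
    refine ⟨⟨hroot, hpos, hIJ⟩, fun ⟨_, hγI⟩ => ne_zero_of_mem_rootSet hroot ?_⟩
    exact (ρ w).map_eq_zero_iff.1 (le_antisymm hneg (apply_nonneg_of_image_simpleRoot hI hpos hγI))
  · rintro ⟨⟨hroot, hpos, hIJ⟩, hnotI⟩
    refine ⟨hroot, hpos, hIJ, ?_⟩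
    exact (IsGeometricRepresentation.nonneg_or_nonpos_of_mem_rootSet hρ
      (apply_mem_rootSet hroot w)).resolve_left
      (not_nonneg_apply_of_notMem_supported hI hJ hpos hIJ fun hγI => hnotI ⟨hroot, hγI⟩)

/-- If `w · Π_I = Π_I` and `w · α_s` is a negative root for
every `s ∈ J`, where `I ∩ J = ∅`, then the set of positive roots of `Φ_{I∪J}`
sent by `w` to negative roots is exactly `Φ⁺_{I∪J} ∖ Φ_I`. -/
theorem stmt_8 {B W : Type*} [Group W] {M : CoxeterMatrix B} (cs : CoxeterSystem M W)
    (ρ : W →* ((B →₀ ℝ) ≃ₗ[ℝ] (B →₀ ℝ)))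
    (hρ : ∀ (s : B) (v : B →₀ ℝ),
      ρ (cs.simple s) v = v - (2 * cForm M (simpleRoot s) v) • simpleRoot s)
    (w : W) (I J : Set B) (hdisj : I ∩ J = ∅)
    (hI : (fun v => ρ w v) '' (simpleRoot '' I) = simpleRoot '' I)
    (hJ : ∀ s ∈ J, ∀ t, (ρ w (simpleRoot s)) t ≤ 0) :
    {γ | γ ∈ rootSet cs ρ ∧ (∀ t, 0 ≤ γ t) ∧ (∀ t ∉ I ∪ J, γ t = 0) ∧
        ∀ t, (ρ w γ) t ≤ 0} =
      {γ | γ ∈ rootSet cs ρ ∧ (∀ t, 0 ≤ γ t) ∧ (∀ t ∉ I ∪ J, γ t = 0)} \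
        {γ | γ ∈ rootSet cs ρ ∧ ∀ t ∉ I, γ t = 0} :=
  stmt_8_general cs ρ hρ w I J hI hJ
end

section
/- Let (W,S) be a Coxeter system, I ⊆ S such that the parabolic subgroup W_I is finite, and suppose the longest element w₀(I) of W_I is central in W_I. Then the centralizer of w₀(I) in W equals the normalizer of W_I in W. -/
/-!
The tool is Tits' action of `W` on `W × ZMod 2` in which `s i` sends `(t, ε)` to
`(s i * t * s i, ε + [t = s i])`; it respects the Coxeter relations because each reflection
occurs an even number of times in the inversion sequence of `(s i * s j) ^ M i j`. Its `ZMod 2`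
component gives the cocycle rule: `t` is a right inversion of `x * y` iff exactly one of
"`y * t * y⁻¹` is a right inversion of `x`" and "`t` is a right inversion of `y`" holds.

Hence right inversions of elements of `W_I` lie in `W_I`, the right inversions of `w₀` are
exactly the reflections of `W_I`, and this determines `w₀`. If `h` commutes with `w₀`, the
cocycle rule shows that conjugation by `h` preserves the right inversions of `w₀` that commute
with `w₀`, among them the `s i` with `i ∈ I`; so `h` normalizes `W_I`. If `g` normalizes `W_I`
and `n` is a shortest element of `g W_I`, then `ℓ (n * w₀) = ℓ n + ℓ w₀`, so
`n * w₀ * n⁻¹ ∈ W_I` is at least as long as `w₀` and hence equals it; `g` differs from `n` by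
an element of `W_I`, which commutes with `w₀`.
-/

theorem List.drop_eq_take_of_getElem_add_eq {α : Type*} {l : List α} {m : ℕ}
    (hl : l.length = 2 * m) (h : ∀ k (hk : k < m), l[k + m] = l[k]) :
    l.drop m = l.take m := by
  apply List.ext_getElem (by simp; omega)
  intro k h₁ h₂
  simp only [List.length_drop, List.length_take] at h₁ h₂
  simpa only [List.getElem_drop, List.getElem_take, add_comm m k] using h k (by omega)

namespace CoxeterSystem

open List

variable {B W : Type*} [Group W] {M : CoxeterMatrix B} (cs : CoxeterSystem M W)

theorem rightInvSeq_eq_leftInvSeq_of_wordProd_eq_one {ω : List B} (h : cs.wordProd ω = 1) :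
    cs.rightInvSeq ω = cs.leftInvSeq ω := by
  apply List.ext_getElem (by simp)
  intro j h₁ h₂
  have key := (cs.wordProd_mul_getD_rightInvSeq ω j).trans
    (cs.getD_leftInvSeq_mul_wordProd ω j).symm
  rwa [h, one_mul, mul_one, getD_eq_getElem _ _ h₁, getD_eq_getElem _ _ h₂] at key

theorem wordProd_alternatingWord_two_mul (i j : B) :
    cs.wordProd (alternatingWord i j (2 * M i j)) = 1 := by
  rw [prod_alternatingWord_eq_mul_pow, if_pos (even_two_mul _), Nat.mul_div_cancel_left _ two_pos,
    one_mul, simple_mul_simple_pow]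

theorem getElem_leftInvSeq_alternatingWord_add (i j : B) {k : ℕ} (hk : k < M i j) :
    (cs.leftInvSeq (alternatingWord i j (2 * M i j)))[k + M i j]'(by simp; omega) =
      (cs.leftInvSeq (alternatingWord i j (2 * M i j)))[k]'(by simp; omega) := by
  rw [getElem_leftInvSeq_alternatingWord _ _ _ _ _ (by omega),
    getElem_leftInvSeq_alternatingWord _ _ _ _ _ (by omega),
    prod_alternatingWord_eq_mul_pow, prod_alternatingWord_eq_mul_pow,
    show (2 * (k + M i j) + 1) / 2 = k + M i j by omega, show (2 * k + 1) / 2 = k by omega,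
    pow_add, M.symmetric, simple_mul_simple_pow, mul_one]
  simp [parity_simps]

theorem even_count_rightInvSeq_alternatingWord [DecidableEq W] (i j : B) (t : W) :
    Even ((cs.rightInvSeq (alternatingWord i j (2 * M i j))).count t) := by
  rw [rightInvSeq_eq_leftInvSeq_of_wordProd_eq_one _ (wordProd_alternatingWord_two_mul cs i j),
    ← take_append_drop (M i j) (cs.leftInvSeq _),
    drop_eq_take_of_getElem_add_eq (by simp) (fun k hk ↦
      getElem_leftInvSeq_alternatingWord_add cs i j hk), count_append]
  exact ⟨_, rfl⟩

theorem prod_map_alternatingWord_two_mul {G : Type*} [Monoid G] (f : B → G) (i j : B) (n : ℕ) :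
    ((alternatingWord i j (2 * n)).map f).prod = (f i * f j) ^ n := by
  induction n with
  | zero => simp [alternatingWord]
  | succ n ih =>
    rw [show 2 * (n + 1) = 2 * n + 1 + 1 by omega, alternatingWord_succ', alternatingWord_succ',
      if_neg (Nat.not_even_two_mul_add_one n), if_pos (even_two_mul n)]
    simp [ih, pow_succ', mul_assoc]

open scoped Classical in
noncomputable def reflectionPerm (i : B) : Equiv.Perm (W × ZMod 2) :=
  Equiv.prodShear (MulAut.conj (cs.simple i)).toEquiv
    fun t ↦ Equiv.addRight (if t = cs.simple i then 1 else 0)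

open scoped Classical in
theorem prod_map_reflectionPerm_apply (ω : List B) (t : W) (ε : ZMod 2) :
    (ω.map cs.reflectionPerm).prod (t, ε) =
      (cs.wordProd ω * t * (cs.wordProd ω)⁻¹, ε + (cs.rightInvSeq ω).count t) := by
  induction ω generalizing t ε with
  | nil => simp
  | cons i ω ih =>
    simp only [map_cons, prod_cons, Equiv.Perm.mul_apply, ih, reflectionPerm, rightInvSeq,
      wordProd_cons, count_cons, beq_iff_eq]
    have hcond : cs.wordProd ω * t * (cs.wordProd ω)⁻¹ = cs.simple i ↔
        (cs.wordProd ω)⁻¹ * cs.simple i * cs.wordProd ω = t := by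
      constructor <;> intro h <;> simp [← h, mul_assoc]
    ext
    · simp [mul_assoc]
    · simp [hcond, add_assoc]

theorem isLiftable_reflectionPerm : M.IsLiftable cs.reflectionPerm := by
  classical
  intro i j
  ext ⟨t, ε⟩ : 1
  obtain ⟨k, hk⟩ := cs.even_count_rightInvSeq_alternatingWord i j t
  rw [← prod_map_alternatingWord_two_mul, prod_map_reflectionPerm_apply,
    wordProd_alternatingWord_two_mul, hk]
  simp [CharTwo.add_self_eq_zero]

noncomputable def reflectionRep : W →* Equiv.Perm (W × ZMod 2) :=
  cs.lift ⟨cs.reflectionPerm, cs.isLiftable_reflectionPerm⟩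

theorem reflectionRep_wordProd (ω : List B) :
    cs.reflectionRep (cs.wordProd ω) = (ω.map cs.reflectionPerm).prod := by
  simp [wordProd, reflectionRep, map_list_prod, Function.comp_def]

noncomputable def invParity (w t : W) : ZMod 2 := (cs.reflectionRep w (t, 0)).2

open scoped Classical in
theorem invParity_wordProd (ω : List B) (t : W) :
    cs.invParity (cs.wordProd ω) t = (cs.rightInvSeq ω).count t := by
  simp [invParity, reflectionRep_wordProd, prod_map_reflectionPerm_apply]

theorem reflectionRep_apply (w t : W) (ε : ZMod 2) :
    cs.reflectionRep w (t, ε) = (w * t * w⁻¹, ε + cs.invParity w t) := by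
  obtain ⟨ω, rfl⟩ := cs.wordProd_surjective w
  rw [reflectionRep_wordProd, prod_map_reflectionPerm_apply, invParity_wordProd]

theorem invParity_mul (x y t : W) :
    cs.invParity (x * y) t = cs.invParity x (y * t * y⁻¹) + cs.invParity y t := by
  rw [invParity, map_mul, Equiv.Perm.mul_apply, reflectionRep_apply cs y, reflectionRep_apply,
    zero_add, add_comm]

theorem invParity_one (t : W) : cs.invParity 1 t = 0 := by
  simp [invParity]

theorem invParity_simple_self (i : B) : cs.invParity (cs.simple i) (cs.simple i) = 1 := by
  simpa using cs.invParity_wordProd [i] (cs.simple i)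

theorem invParity_self {t : W} (ht : cs.IsReflection t) : cs.invParity t t = 1 := by
  obtain ⟨u, i, rfl⟩ := ht
  have h₁ := cs.invParity_mul (u * cs.simple i) u⁻¹ (u * cs.simple i * u⁻¹)
  have h₂ := cs.invParity_mul u (cs.simple i) (cs.simple i)
  have h₃ := cs.invParity_mul u u⁻¹ (u * cs.simple i * u⁻¹)
  simp only [mul_inv_cancel, invParity_one, inv_simple, invParity_simple_self,
    show u⁻¹ * (u * cs.simple i * u⁻¹) * u⁻¹⁻¹ = cs.simple i by group,
    show cs.simple i * cs.simple i * cs.simple i = cs.simple i by simp] at h₁ h₂ h₃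
  linear_combination h₁ + h₂ - h₃

theorem isRightInversion_of_invParity_eq_one {w t : W} (h : cs.invParity w t = 1) :
    cs.IsRightInversion w t := by
  classical
  obtain ⟨ω, hω, rfl⟩ := cs.exists_isReduced w
  refine cs.isRightInversion_of_mem_rightInvSeq hω (count_pos_iff.mp (Nat.pos_of_ne_zero ?_))
  intro h0
  simp [invParity_wordProd, h0] at h

theorem invParity_eq_one_iff {w t : W} : cs.invParity w t = 1 ↔ cs.IsRightInversion w t := by
  refine ⟨cs.isRightInversion_of_invParity_eq_one, fun ⟨ht, hlt⟩ ↦ ?_⟩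
  have hwt : ¬cs.IsRightInversion (w * t) t := fun ⟨_, hlt'⟩ ↦ by
    rw [mul_assoc, ht.mul_self, mul_one] at hlt'
    omega
  have hsplit := cs.invParity_mul (w * t) t t
  rw [mul_assoc, ht.mul_self, mul_one, one_mul, ht.inv, invParity_self cs ht] at hsplit
  rw [hsplit]
  have ha := mt cs.isRightInversion_of_invParity_eq_one hwt
  generalize cs.invParity (w * t) t = a at ha ⊢
  revert a; decide

theorem isRightInversion_mul_iff {x y t : W} :
    cs.IsRightInversion (x * y) t ↔
      Xor (cs.IsRightInversion x (y * t * y⁻¹)) (cs.IsRightInversion y t) := by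
  rw [← invParity_eq_one_iff, ← invParity_eq_one_iff, ← invParity_eq_one_iff, invParity_mul]
  generalize cs.invParity x (y * t * y⁻¹) = a
  generalize cs.invParity y t = b
  revert a b; decide

theorem not_isRightInversion_one (t : W) : ¬cs.IsRightInversion 1 t := fun h ↦ by
  simpa using h.2

theorem isRightInversion_inv_iff_conj {x t : W} :
    cs.IsRightInversion x⁻¹ t ↔ cs.IsRightInversion x (x⁻¹ * t * x) := by
  have key := cs.isRightInversion_mul_iff (x := x) (y := x⁻¹) (t := t)
  rw [mul_inv_cancel, inv_inv, xor_iff_not_iff] at key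
  have := cs.not_isRightInversion_one t
  tauto

theorem eq_simple_of_isRightInversion_simple {i : B} {t : W}
    (h : cs.IsRightInversion (cs.simple i) t) : t = cs.simple i := by
  have hlt := h.2
  rw [length_simple, Nat.lt_one_iff, length_eq_zero_iff] at hlt
  rw [eq_inv_of_mul_eq_one_right hlt, inv_simple]

theorem eq_of_forall_isRightInversion_iff {u v : W}
    (h : ∀ t, cs.IsRightInversion u t ↔ cs.IsRightInversion v t) : u = v := by
  have hnone : ∀ t, ¬cs.IsRightInversion (u * v⁻¹) t := fun t ht ↦ by
    have key := cs.isRightInversion_mul_iff (x := u * v⁻¹) (y := v) (t := v⁻¹ * t * v)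
    rw [inv_mul_cancel_right, show v * (v⁻¹ * t * v) * v⁻¹ = t by group, h,
      xor_iff_not_iff] at key
    tauto
  by_contra hne
  obtain ⟨i, hi⟩ := cs.exists_rightDescent_of_ne_one (mt mul_inv_eq_one.mp hne)
  exact hnone _ ((cs.isRightInversion_simple_iff_isRightDescent _ i).mpr hi)

theorem isRightInversion_conj_iff_of_commute {w h t : W} (hc : Commute w h)
    (ht : w * t * w⁻¹ = t) :
    cs.IsRightInversion w (h * t * h⁻¹) ↔ cs.IsRightInversion w t := by
  have key := cs.isRightInversion_mul_iff (x := w) (y := h) (t := t)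
  rw [hc.eq, cs.isRightInversion_mul_iff, ht, xor_iff_not_iff, xor_iff_not_iff] at key
  tauto

section Parabolic

variable {I : Set B}

theorem mem_closure_of_isRightInversion {w t : W} (hw : w ∈ Subgroup.closure (cs.simple '' I))
    (ht : cs.IsRightInversion w t) : t ∈ Subgroup.closure (cs.simple '' I) := by
  induction hw using Subgroup.closure_induction generalizing t with
  | mem x hx =>
    obtain ⟨i, hi, rfl⟩ := hx
    rw [cs.eq_simple_of_isRightInversion_simple ht]
    exact Subgroup.subset_closure ⟨i, hi, rfl⟩
  | one => exact absurd ht (cs.not_isRightInversion_one t)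
  | mul x y _ hy ihx ihy =>
    rcases cs.isRightInversion_mul_iff.mp ht with ⟨hx', -⟩ | ⟨hy', -⟩
    · simpa [mul_assoc] using mul_mem (mul_mem (inv_mem hy) (ihx hx')) hy
    · exact ihy hy'
  | inv x hx ih =>
    have hconj := ih (cs.isRightInversion_inv_iff_conj.mp ht)
    simpa [mul_assoc] using mul_mem (mul_mem hx hconj) (inv_mem hx)

theorem isRightInversion_of_forall_length_le {H : Subgroup W} {w t : W} (hw : w ∈ H)
    (hmax : ∀ u ∈ H, cs.length u ≤ cs.length w) (ht : t ∈ H) (hr : cs.IsReflection t) :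
    cs.IsRightInversion w t :=
  ⟨hr, (hmax _ (mul_mem hw ht)).lt_of_ne (hr.length_mul_left_ne w)⟩

theorem isRightInversion_iff_of_forall_length_le {w t : W}
    (hw : w ∈ Subgroup.closure (cs.simple '' I))
    (hmax : ∀ u ∈ Subgroup.closure (cs.simple '' I), cs.length u ≤ cs.length w) :
    cs.IsRightInversion w t ↔ t ∈ Subgroup.closure (cs.simple '' I) ∧ cs.IsReflection t :=
  ⟨fun ht ↦ ⟨cs.mem_closure_of_isRightInversion hw ht, ht.1⟩,
    fun ⟨htI, hr⟩ ↦ cs.isRightInversion_of_forall_length_le hw hmax htI hr⟩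

theorem eq_of_forall_length_le {w w' : W} (hw : w ∈ Subgroup.closure (cs.simple '' I))
    (hw' : w' ∈ Subgroup.closure (cs.simple '' I))
    (hmax : ∀ u ∈ Subgroup.closure (cs.simple '' I), cs.length u ≤ cs.length w)
    (hmax' : ∀ u ∈ Subgroup.closure (cs.simple '' I), cs.length u ≤ cs.length w') : w = w' :=
  cs.eq_of_forall_isRightInversion_iff fun _ ↦ by
    rw [cs.isRightInversion_iff_of_forall_length_le hw hmax,
      cs.isRightInversion_iff_of_forall_length_le hw' hmax']

theorem exists_mem_forall_not_isRightInversion_mul (I : Set B) (g : W) :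
    ∃ p ∈ Subgroup.closure (cs.simple '' I),
      ∀ t ∈ Subgroup.closure (cs.simple '' I), ¬cs.IsRightInversion (g * p) t := by
  obtain ⟨p, hp, hmin⟩ := (InvImage.wf (fun p ↦ cs.length (g * p)) wellFounded_lt).has_min
    (Subgroup.closure (cs.simple '' I) : Set W) ⟨1, one_mem _⟩
  refine ⟨p, hp, fun t ht hinv ↦ hmin (p * t) (mul_mem hp ht) ?_⟩
  simpa [InvImage, mul_assoc] using hinv.2

theorem length_mul_of_forall_not_isRightInversion {n u : W}
    (hn : ∀ t ∈ Subgroup.closure (cs.simple '' I), ¬cs.IsRightInversion n t)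
    (hu : u ∈ Subgroup.closure (cs.simple '' I)) :
    cs.length (n * u) = cs.length n + cs.length u := by
  induction hℓ : cs.length u generalizing u with
  | zero => simp [cs.length_eq_zero_iff.mp hℓ]
  | succ k ih =>
    obtain ⟨i, hi⟩ := cs.exists_rightDescent_of_ne_one (w := u) fun h ↦ by
      have := cs.length_eq_zero_iff.mpr h
      omega
    have hsi := (cs.isRightInversion_simple_iff_isRightDescent u i).mpr hi
    have hsI := cs.mem_closure_of_isRightInversion hu hsi
    have hus : cs.length (u * cs.simple i) = k := by
      have := cs.isRightDescent_iff.mp hi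
      omega
    have hnus := ih (mul_mem hu hsI) hus
    have hdesc : cs.IsRightInversion (n * u) (cs.simple i) :=
      cs.isRightInversion_mul_iff.mpr
        (Or.inr ⟨hsi, hn _ (mul_mem (mul_mem hu hsI) (inv_mem hu))⟩)
    have hnu := cs.isRightDescent_iff.mp
      ((cs.isRightInversion_simple_iff_isRightDescent _ i).mp hdesc)
    rw [mul_assoc] at hnu
    omega

section LongestElement

variable {w₀ : W} (hmem : w₀ ∈ Subgroup.closure (cs.simple '' I))
  (hlongest : ∀ u ∈ Subgroup.closure (cs.simple '' I), cs.length u ≤ cs.length w₀)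
  (hcentral : ∀ u ∈ Subgroup.closure (cs.simple '' I), w₀ * u = u * w₀)
include hmem hlongest hcentral

theorem normalizer_closure_le_centralizer :
    Subgroup.normalizer (Subgroup.closure (cs.simple '' I)) ≤ Subgroup.centralizer {w₀} := by
  intro g hg
  obtain ⟨p, hp, hmin⟩ := cs.exists_mem_forall_not_isRightInversion_mul I g
  have hconj : (g * p) * w₀ * (g * p)⁻¹ ∈ Subgroup.closure (cs.simple '' I) := by
    simpa [mul_assoc] using
      (Subgroup.mem_normalizer_iff.mp hg _).mp (mul_mem (mul_mem hp hmem) (inv_mem hp))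
  have hlen : cs.length w₀ ≤ cs.length ((g * p) * w₀ * (g * p)⁻¹) := by
    have := cs.length_mul_of_forall_not_isRightInversion hmin hmem
    have := cs.length_le_length_mul_add_right (g * p * w₀) (g * p)⁻¹
    rw [length_inv] at this
    omega
  have hfix : (g * p) * w₀ * (g * p)⁻¹ = w₀ :=
    cs.eq_of_forall_length_le hconj hmem (fun u hu ↦ (hlongest u hu).trans hlen) hlongest
  rw [Subgroup.mem_centralizer_singleton_iff]
  calc g * w₀ = (g * p) * w₀ * (g * p)⁻¹ * g := by
        rw [mul_inv_rev, show g * p * w₀ * (p⁻¹ * g⁻¹) * g = g * (p * w₀ * p⁻¹) by group,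
          ← hcentral p hp, mul_inv_cancel_right]
    _ = w₀ * g := by rw [hfix]

theorem centralizer_le_normalizer_closure :
    Subgroup.centralizer {w₀} ≤ Subgroup.normalizer (Subgroup.closure (cs.simple '' I)) := by
  rw [Subgroup.le_normalizer_closure_iff]
  rintro h hh _ ⟨i, hi, rfl⟩
  have hsI : cs.simple i ∈ Subgroup.closure (cs.simple '' I) :=
    Subgroup.subset_closure ⟨i, hi, rfl⟩
  have hfix : w₀ * cs.simple i * w₀⁻¹ = cs.simple i := by
    rw [hcentral _ hsI, mul_inv_cancel_right]
  have hcomm : Commute w₀ h := (Subgroup.mem_centralizer_singleton_iff.mp hh).symm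
  refine cs.mem_closure_of_isRightInversion hmem ?_
  rw [cs.isRightInversion_conj_iff_of_commute hcomm hfix]
  exact (cs.isRightInversion_iff_of_forall_length_le hmem hlongest).mpr
    ⟨hsI, cs.isReflection_simple i⟩

end LongestElement

end Parabolic

end CoxeterSystem

theorem stmt_12_general {B W : Type*} [Group W] {M : CoxeterMatrix B}
    (cs : CoxeterSystem M W) (I : Set B)
    (w0 : W) (hmem : w0 ∈ Subgroup.closure (cs.simple '' I))
    (hlongest : ∀ u ∈ Subgroup.closure (cs.simple '' I), cs.length u ≤ cs.length w0)
    (hcentral : ∀ u ∈ Subgroup.closure (cs.simple '' I), w0 * u = u * w0) :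
    Subgroup.centralizer {w0} =
      Subgroup.normalizer (Subgroup.closure (cs.simple '' I)) :=
  le_antisymm (cs.centralizer_le_normalizer_closure hmem hlongest hcentral)
    (cs.normalizer_closure_le_centralizer hmem hlongest hcentral)

/-- Let `W_I` be a finite standard parabolic subgroup of a
Coxeter group and `w₀(I)` its longest element; if `w₀(I)` is central in `W_I`,
then the centralizer of `w₀(I)` in `W` equals the normalizer of `W_I`. -/
theorem stmt_12 {B W : Type*} [Group W] {M : CoxeterMatrix B}
    (cs : CoxeterSystem M W) (I : Set B)
    (hfin : ((Subgroup.closure (cs.simple '' I) : Subgroup W) : Set W).Finite)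
    (w0 : W) (hmem : w0 ∈ Subgroup.closure (cs.simple '' I))
    (hlongest : ∀ u ∈ Subgroup.closure (cs.simple '' I), cs.length u ≤ cs.length w0)
    (hcentral : ∀ u ∈ Subgroup.closure (cs.simple '' I), w0 * u = u * w0) :
    Subgroup.centralizer {w0} =
      Subgroup.normalizer (Subgroup.closure (cs.simple '' I)) :=
  stmt_12_general cs I w0 hmem hlongest hcentral
end

section
/- Let (W,S) be a Coxeter system, I ⊆ J ⊆ S with J ∖ I ⊆ I^⊥ (i.e. every element of J ∖ I commutes with every element of I). Then N_W(W_J) ∩ N_W(W_I) ⊆ N_W(W_{J∖I}). -/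
/-!
Write `W_K` for the subgroup generated by the `s k`, `k ∈ K`. Let `w` normalize `W_J` and `W_I`,
and let `i ∈ J ∖ I`; the reflection `t = w sᵢ w⁻¹` lies in `W_J`. Tits' sign cocycle shows that a
reflection of `W_J` is conjugate in `W_J` to some `s k` with `k ∈ J`. As `W_J = W_{J∖I} W_I` with
the two factors commuting elementwise, `t` is then conjugate to `s k` inside `W_{J∖I}` (if `k ∉ I`)
or inside `W_I` (if `k ∈ I`). In the second case `sᵢ = w⁻¹ t w ∈ W_I`, which the geometric
representation rules out: `W_I` fixes every coordinate outside `I`, while `sᵢ eᵢ = -eᵢ`.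

The geometric representation satisfies the Coxeter relations because `σ_a σ_b` only moves vectors
within the span of `e_a, e_b`, and acts on the pair of linear forms defining `σ_a, σ_b` as a
rotation by `2π / m(a, b)`.
-/

namespace Module

variable {V : Type*} [AddCommGroup V] [Module ℝ V] {x y : V} {f g : Dual ℝ V}

theorem reflection_mul_reflection_pow_apply_sub_mem_span (hf : f x = 2) (hg : g y = 2)
    (k : ℕ) (v : V) : ((reflection hf * reflection hg) ^ k) v - v ∈ Submodule.span ℝ {x, y} := by
  induction k with
  | zero => simp
  | succ k ih =>
    set u := ((reflection hf * reflection hg) ^ k) v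
    have hstep : (reflection hf * reflection hg) u - u ∈ Submodule.span ℝ {x, y} :=
      Submodule.mem_span_pair.mpr ⟨-f (reflection hg u), -g u, by
        simp only [LinearEquiv.mul_apply, reflection_apply]; module⟩
    simpa [pow_succ', u] using Submodule.add_mem _ hstep ih

theorem eq_zero_of_mem_span_pair_of_apply_eq_zero {c : ℝ} (hc : c ^ 2 < 1) (hf : f x = 2)
    (hg : g y = 2) (hfy : f y = -2 * c) (hgx : g x = -2 * c) {d : V}
    (hd : d ∈ Submodule.span ℝ {x, y}) (hfd : f d = 0) (hgd : g d = 0) : d = 0 := by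
  obtain ⟨p, q, rfl⟩ := Submodule.mem_span_pair.mp hd
  simp only [map_add, map_smul, hf, hg, hfy, hgx, smul_eq_mul] at hfd hgd
  have hpc : p * (1 - c ^ 2) = 0 := by linear_combination (hfd + c * hgd) / 2
  have hp : p = 0 := by simpa [sub_eq_zero, hc.ne'] using hpc
  have hq : q = 0 := by subst hp; linarith
  simp [hp, hq]

/-- On the plane of the linear forms `f, g`, the product of the two reflections acts as the rotation
by `ζ ^ 2`. -/
theorem reflection_mul_reflection_pow_apply_add_mul {c : ℝ} {ζ : ℂ} (hζ : ζ ^ 2 + 1 = 2 * c * ζ)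
    (hf : f x = 2) (hg : g y = 2) (hfy : f y = -2 * c) (hgx : g x = -2 * c) (k : ℕ) (v : V) :
    (f (((reflection hf * reflection hg) ^ k) v) : ℂ) +
        ζ * g (((reflection hf * reflection hg) ^ k) v) = ζ ^ (2 * k) * (f v + ζ * g v) := by
  induction k generalizing v with
  | zero => simp
  | succ k ih =>
    rw [pow_succ, LinearEquiv.mul_apply, ih]
    simp only [LinearEquiv.mul_apply, reflection_apply, map_sub, map_smul, hf, hg, hfy, hgx,
      smul_eq_mul]
    push_cast
    linear_combination (-ζ ^ (2 * k) * (f v + g v * (ζ + 2 * c)) : ℂ) * hζ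

open Complex in
theorem reflection_mul_reflection_pow_eq_one (hf : f x = 2) (hg : g y = 2) {m : ℕ} (hm : 2 ≤ m)
    (hfy : f y = -2 * Real.cos (Real.pi / m)) (hgx : g x = -2 * Real.cos (Real.pi / m)) :
    (reflection hf * reflection hg) ^ m = 1 := by
  set θ := Real.pi / m
  have hsin : 0 < Real.sin θ := by
    have : (1 : ℝ) < m := by exact_mod_cast hm
    exact Real.sin_pos_of_pos_of_lt_pi (by positivity) (div_lt_self Real.pi_pos this)
  have hcos : Real.cos θ ^ 2 < 1 := by nlinarith [Real.sin_sq_add_cos_sq θ]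
  set ζ : ℂ := exp (θ * I)
  have hζm : ζ ^ (2 * m) = 1 := by
    have : (m : ℂ) ≠ 0 := by exact_mod_cast (show m ≠ 0 by omega)
    rw [← exp_nat_mul, ← exp_two_pi_mul_I]; congr 1; simp only [θ]; push_cast; field_simp
  have hζ : ζ ^ 2 + 1 = 2 * Real.cos θ * ζ := by
    have hcs : (Real.sin θ : ℂ) ^ 2 + Real.cos θ ^ 2 = 1 := by
      exact_mod_cast Real.sin_sq_add_cos_sq θ
    rw [show ζ = Real.cos θ + Real.sin θ * I by simp [ζ, exp_mul_I, ← ofReal_cos, ← ofReal_sin]]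
    linear_combination -hcs + (Real.sin θ : ℂ) ^ 2 * I_sq
  ext v
  set d := ((reflection hf * reflection hg) ^ m) v - v
  have hd : (f d : ℂ) + ζ * g d = 0 := by
    have := reflection_mul_reflection_pow_apply_add_mul hζ hf hg hfy hgx m v
    rw [hζm, one_mul] at this
    simp only [d, map_sub]; push_cast; linear_combination this
  have hgd : g d = 0 := by
    simpa [ζ, exp_ofReal_mul_I_im, hsin.ne'] using congrArg Complex.im hd
  have hfd : f d = 0 := by
    simpa [hgd] using hd
  exact sub_eq_zero.mp (eq_zero_of_mem_span_pair_of_apply_eq_zero hcos hf hg hfy hgx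
    (reflection_mul_reflection_pow_apply_sub_mem_span hf hg m v) hfd hgd)

end Module

namespace CoxeterMatrix

variable {B : Type*} (M : CoxeterMatrix B)

/-- For `M a b = 0` (i.e. `m = ∞`), Lean's `π / 0 = 0` gives the standard value `-2`. -/
noncomputable def coroot (a : B) : Module.Dual ℝ (B →₀ ℝ) :=
  Finsupp.linearCombination ℝ fun b => -2 * Real.cos (Real.pi / M a b)

theorem coroot_single (a b : B) (r : ℝ) :
    M.coroot a (Finsupp.single b r) = r * (-2 * Real.cos (Real.pi / M a b)) := by
  simp [coroot]

theorem coroot_single_self (a : B) : M.coroot a (Finsupp.single a 1) = 2 := by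
  simp [coroot_single]

noncomputable def reflection (a : B) : (B →₀ ℝ) ≃ₗ[ℝ] (B →₀ ℝ) :=
  Module.reflection (M.coroot_single_self a)

theorem reflection_apply (a : B) (v : B →₀ ℝ) :
    M.reflection a v = v - M.coroot a v • Finsupp.single a 1 :=
  Module.reflection_apply _ _

theorem isLiftable_reflection : M.IsLiftable M.reflection := by
  intro a b
  rcases eq_or_ne a b with rfl | hab
  · rw [M.diagonal, pow_one]
    exact mul_eq_one_iff_eq_inv.mpr (Module.reflection_inv _).symm
  rcases Nat.eq_zero_or_pos (M a b) with h | h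
  · rw [h, pow_zero]
  · have h2 : 2 ≤ M a b := by have := M.off_diagonal a b hab; omega
    exact Module.reflection_mul_reflection_pow_eq_one _ _ h2 (by simp [coroot_single])
      (by simp [coroot_single, M.symmetric a b])

end CoxeterMatrix

namespace CoxeterSystem

section FlipSign

variable {G : Type*}

open scoped Classical in
noncomputable def flipSign (y x : G) : ℤˣ := if x = y then -1 else 1

theorem flipSign_eq_neg_one_iff {y x : G} : flipSign y x = -1 ↔ x = y := by
  by_cases h : x = y <;> simp [flipSign, h]

theorem flipSign_conj [Group G] (g y x : G) :
    flipSign y (g * x * g⁻¹) = flipSign (g⁻¹ * y * g) x := by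
  classical
  have h : g * x * g⁻¹ = y ↔ x = g⁻¹ * y * g := by constructor <;> rintro rfl <;> group
  exact if_congr h rfl rfl

end FlipSign

variable {B W : Type*} [Group W] {M : CoxeterMatrix B} (cs : CoxeterSystem M W)

local prefix:100 "s " => cs.simple

noncomputable def geometricRepresentation : W →* ((B →₀ ℝ) ≃ₗ[ℝ] (B →₀ ℝ)) :=
  cs.lift ⟨M.reflection, M.isLiftable_reflection⟩

theorem geometricRepresentation_simple (i : B) :
    cs.geometricRepresentation (s i) = M.reflection i :=
  cs.lift_apply_simple M.isLiftable_reflection i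

theorem geometricRepresentation_apply_apply_of_mem_closure {K : Set B} {w : W}
    (hw : w ∈ Subgroup.closure (cs.simple '' K)) (v : B →₀ ℝ) {j : B} (hj : j ∉ K) :
    cs.geometricRepresentation w v j = v j := by
  induction hw using Subgroup.closure_induction generalizing v with
  | mem _ h =>
    obtain ⟨k, hk, rfl⟩ := h
    rw [geometricRepresentation_simple, M.reflection_apply, Finsupp.sub_apply,
      Finsupp.smul_apply, Finsupp.single_eq_of_ne (by rintro rfl; exact hj hk), smul_zero, sub_zero]
  | one => simp
  | mul u w _ _ ihu ihw => rw [map_mul, LinearEquiv.mul_apply, ihu, ihw]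
  | inv w _ ih =>
    rw [← ih, ← LinearEquiv.mul_apply, ← map_mul, mul_inv_cancel, map_one]
    rfl

theorem simple_mem_closure_iff {K : Set B} {i : B} :
    s i ∈ Subgroup.closure (cs.simple '' K) ↔ i ∈ K := by
  refine ⟨fun h => ?_, fun hi => Subgroup.subset_closure ⟨i, hi, rfl⟩⟩
  by_contra hi
  have := cs.geometricRepresentation_apply_apply_of_mem_closure h (Finsupp.single i 1) hi
  rw [geometricRepresentation_simple, M.reflection_apply, M.coroot_single_self] at this
  norm_num at this

theorem flipSign_simple_conj (i : B) (x : W) :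
    flipSign (s i) (s i * x * s i) = flipSign (s i) x := by
  simpa using flipSign_conj (s i) (s i) x

noncomputable def titsPerm (i : B) : Equiv.Perm (W × ℤˣ) :=
  Function.Involutive.toPerm (fun p => (s i * p.1 * s i, p.2 * flipSign (s i) p.1))
    fun p => by
      dsimp only
      rw [flipSign_simple_conj, mul_assoc p.2, Int.units_mul_self, mul_one]
      simp [mul_assoc]

theorem titsPerm_apply (i : B) (x : W) (ε : ℤˣ) :
    cs.titsPerm i (x, ε) = (s i * x * s i, ε * flipSign (s i) x) := rfl

theorem simple_mul_pow_mul_simple (a b : B) (k : ℕ) :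
    s b * (s a * s b) ^ k = (s b * s a) ^ k * s b :=
  (SemiconjBy.pow_right (by simp [SemiconjBy, mul_assoc]) k).eq

theorem titsPerm_mul_pow_apply (a b : B) (k : ℕ) (x : W) (ε : ℤˣ) :
    ((cs.titsPerm a * cs.titsPerm b) ^ k) (x, ε) =
      ((s a * s b) ^ k * x * ((s a * s b) ^ k)⁻¹,
        ε * ∏ l ∈ Finset.range (2 * k), flipSign ((s b * s a) ^ l * s b) x) := by
  induction k with
  | zero => simp
  | succ k ih =>
    have hinv : ((s a * s b) ^ k)⁻¹ = (s b * s a) ^ k := by simp [← inv_pow]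
    have e₁ : flipSign (s b) ((s a * s b) ^ k * x * ((s a * s b) ^ k)⁻¹) =
        flipSign ((s b * s a) ^ (2 * k) * s b) x := by
      rw [flipSign_conj, hinv, mul_assoc, simple_mul_pow_mul_simple, ← mul_assoc, ← pow_add,
        two_mul]
    have e₂ : flipSign (s a) (s b * ((s a * s b) ^ k * x * ((s a * s b) ^ k)⁻¹) * s b) =
        flipSign ((s b * s a) ^ (2 * k + 1) * s b) x := by
      rw [show s b * ((s a * s b) ^ k * x * ((s a * s b) ^ k)⁻¹) * s b =
          (s b * (s a * s b) ^ k) * x * (s b * (s a * s b) ^ k)⁻¹ by simp [mul_assoc],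
        flipSign_conj, mul_inv_rev, inv_simple, hinv, simple_mul_pow_mul_simple,
        show (s b * s a) ^ (2 * k + 1) = (s b * s a) ^ k * (s b * s a) * (s b * s a) ^ k by
          rw [← pow_succ, ← pow_add]; ring_nf]
      simp only [mul_assoc]
    rw [pow_succ', Equiv.Perm.mul_apply, Equiv.Perm.mul_apply, ih, titsPerm_apply, titsPerm_apply,
      e₁, e₂, show 2 * (k + 1) = 2 * k + 1 + 1 by ring, Finset.prod_range_succ,
      Finset.prod_range_succ]
    simp [pow_succ', mul_assoc]

theorem isLiftable_titsPerm : M.IsLiftable cs.titsPerm := by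
  intro a b
  ext ⟨x, ε⟩ : 1
  -- The points `(s b * s a) ^ l * s b` where the sign flips are `M a b`-periodic in `l`,
  -- so over `2 * M a b` steps every flip happens twice.
  rw [titsPerm_mul_pow_apply, simple_mul_simple_pow, two_mul, Finset.prod_range_add,
    ← Finset.prod_mul_distrib]
  simp [pow_add, Int.units_mul_self]

noncomputable def titsAction : W →* Equiv.Perm (W × ℤˣ) :=
  cs.lift ⟨cs.titsPerm, cs.isLiftable_titsPerm⟩

theorem titsAction_simple (i : B) : cs.titsAction (s i) = cs.titsPerm i :=
  cs.lift_apply_simple cs.isLiftable_titsPerm i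

noncomputable def reflectionCocycle (w x : W) : ℤˣ := (cs.titsAction w (x, 1)).2

theorem titsAction_apply (w x : W) (ε : ℤˣ) :
    cs.titsAction w (x, ε) = (w * x * w⁻¹, ε * cs.reflectionCocycle w x) := by
  induction w using cs.simple_induction_left generalizing ε with
  | one => simp [reflectionCocycle]
  | mul_simple_left w i ih =>
    have h : ∀ δ : ℤˣ, cs.titsAction (s i * w) (x, δ) =
        (s i * w * x * (s i * w)⁻¹,
          δ * (cs.reflectionCocycle w x * flipSign (s i) (w * x * w⁻¹))) := fun δ => by
      rw [map_mul, Equiv.Perm.mul_apply, ih, titsAction_simple, titsPerm_apply]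
      simp [mul_assoc]
    show _ = (_, ε * (cs.titsAction (s i * w) (x, 1)).2)
    rw [h, h, one_mul]

theorem reflectionCocycle_mul (u v x : W) :
    cs.reflectionCocycle (u * v) x =
      cs.reflectionCocycle u (v * x * v⁻¹) * cs.reflectionCocycle v x := by
  have h := congrArg Prod.snd (congrArg (· (x, 1)) (map_mul cs.titsAction u v))
  simp only [Equiv.Perm.mul_apply, titsAction_apply, one_mul] at h
  rw [h, mul_comm]

theorem reflectionCocycle_one (x : W) : cs.reflectionCocycle 1 x = 1 := by
  simp [reflectionCocycle]

theorem reflectionCocycle_simple (i : B) (x : W) :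
    cs.reflectionCocycle (s i) x = flipSign (s i) x := by
  simp [reflectionCocycle, titsAction_simple, titsPerm_apply]

theorem reflectionCocycle_inv_mul (w x : W) :
    cs.reflectionCocycle w⁻¹ x * cs.reflectionCocycle w (w⁻¹ * x * w) = 1 := by
  simpa [mul_assoc, reflectionCocycle_one] using
    (cs.reflectionCocycle_mul w⁻¹ w (w⁻¹ * x * w)).symm

variable {cs} in
theorem IsReflection.reflectionCocycle_self {t : W} (ht : cs.IsReflection t) :
    cs.reflectionCocycle t t = -1 := by
  obtain ⟨w, i, rfl⟩ := ht
  have h := cs.reflectionCocycle_inv_mul w (w * s i * w⁻¹)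
  rw [show w⁻¹ * (w * s i * w⁻¹) * w = s i by group, mul_comm] at h
  rw [reflectionCocycle_mul, reflectionCocycle_mul,
    show w⁻¹ * (w * s i * w⁻¹) * w⁻¹⁻¹ = s i by group, show s i * s i * (s i)⁻¹ = s i by group,
    reflectionCocycle_simple, flipSign_eq_neg_one_iff.mpr rfl, mul_right_comm, h, one_mul]

theorem exists_conj_simple_of_reflectionCocycle_eq_neg_one {K : Set B} {w : W}
    (hw : w ∈ Subgroup.closure (cs.simple '' K)) {x : W} (hx : cs.reflectionCocycle w x = -1) :
    ∃ u ∈ Subgroup.closure (cs.simple '' K), ∃ k ∈ K, x = u * s k * u⁻¹ := by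
  induction hw using Subgroup.closure_induction generalizing x with
  | mem _ h =>
    obtain ⟨k, hk, rfl⟩ := h
    rw [reflectionCocycle_simple, flipSign_eq_neg_one_iff] at hx
    exact ⟨1, one_mem _, k, hk, by simp [hx]⟩
  | one => simp [reflectionCocycle_one] at hx
  | mul u v _ hv ihu ihv =>
    rw [reflectionCocycle_mul] at hx
    rcases Int.units_eq_one_or (cs.reflectionCocycle v x) with h | h
    · rw [h, mul_one] at hx
      obtain ⟨u', hu', k, hk, e⟩ := ihu hx
      exact ⟨v⁻¹ * u', mul_mem (inv_mem hv) hu', k, hk, by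
        rw [show x = v⁻¹ * (v * x * v⁻¹) * v by group, e]; group⟩
    · exact ihv h
  | inv w hw ih =>
    have h := cs.reflectionCocycle_inv_mul w x
    rw [hx, neg_one_mul, neg_eq_iff_eq_neg] at h
    obtain ⟨u, hu, k, hk, e⟩ := ih h
    exact ⟨w * u, mul_mem hw hu, k, hk, by
      rw [show x = w * (w⁻¹ * x * w) * w⁻¹ by group, e]; group⟩

variable {cs} in
theorem IsReflection.exists_conj_simple_of_mem_closure {K : Set B} {t : W}
    (ht : cs.IsReflection t) (h : t ∈ Subgroup.closure (cs.simple '' K)) :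
    ∃ u ∈ Subgroup.closure (cs.simple '' K), ∃ k ∈ K, t = u * s k * u⁻¹ :=
  cs.exists_conj_simple_of_reflectionCocycle_eq_neg_one h ht.reflectionCocycle_self

theorem commute_simple_of_eq_two {i j : B} (h : M i j = 2) : Commute (s i) (s j) := by
  have := cs.simple_mul_simple_pow i j
  rw [h, pow_two, mul_eq_one_iff_eq_inv, mul_inv_rev, inv_simple, inv_simple] at this
  exact this

theorem commute_of_mem_closure {P Q : Set B} (hPQ : ∀ p ∈ P, ∀ q ∈ Q, M p q = 2) {a b : W}
    (ha : a ∈ Subgroup.closure (cs.simple '' P)) (hb : b ∈ Subgroup.closure (cs.simple '' Q)) :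
    Commute a b := by
  have : Subgroup.closure (cs.simple '' P) ≤
      Subgroup.centralizer (Subgroup.closure (cs.simple '' Q)) := by
    rw [Subgroup.centralizer_closure, Subgroup.closure_le]
    rintro _ ⟨p, hp, rfl⟩ _ ⟨q, hq, rfl⟩
    exact (cs.commute_simple_of_eq_two (hPQ p hp q hq)).eq.symm
  exact (this ha b hb).symm

variable {cs} in
theorem IsReflection.mem_closure_or_mem_closure {P Q : Set B}
    (hPQ : ∀ p ∈ P, ∀ q ∈ Q, M p q = 2) {t : W} (ht : cs.IsReflection t)
    (h : t ∈ Subgroup.closure (cs.simple '' (P ∪ Q))) :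
    t ∈ Subgroup.closure (cs.simple '' P) ∨ t ∈ Subgroup.closure (cs.simple '' Q) := by
  obtain ⟨u, hu, k, hk, rfl⟩ := ht.exists_conj_simple_of_mem_closure h
  have hPQ_le : Subgroup.closure (cs.simple '' P) ≤
      Subgroup.normalizer (Subgroup.closure (cs.simple '' Q) : Set W) :=
    Subgroup.le_normalizer_iff.mpr fun a ha b hb => by
      rwa [(cs.commute_of_mem_closure hPQ ha hb).eq, mul_inv_cancel_right]
  rw [Set.image_union, Subgroup.closure_union, ← SetLike.mem_coe,
    Subgroup.coe_mul_of_left_le_normalizer_right _ _ hPQ_le] at hu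
  obtain ⟨a, ha, b, hb, rfl⟩ := hu
  rcases hk with hk | hk
  · have hk' : s k ∈ Subgroup.closure (cs.simple '' P) := Subgroup.subset_closure ⟨k, hk, rfl⟩
    have hc := cs.commute_of_mem_closure hPQ hk' hb
    left
    rw [mul_inv_rev, mul_assoc a b, ← hc.eq,
      show a * (s k * b) * (b⁻¹ * a⁻¹) = a * s k * a⁻¹ by group]
    exact mul_mem (mul_mem ha hk') (inv_mem ha)
  · have hk' : b * s k * b⁻¹ ∈ Subgroup.closure (cs.simple '' Q) :=
      mul_mem (mul_mem hb (Subgroup.subset_closure ⟨k, hk, rfl⟩)) (inv_mem hb)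
    right
    rwa [show a * b * s k * (a * b)⁻¹ = a * (b * s k * b⁻¹) * a⁻¹ by group,
      (cs.commute_of_mem_closure hPQ ha hk').eq, mul_inv_cancel_right]

end CoxeterSystem

/-- If `I ⊆ J ⊆ S` and every element of `J ∖ I` commutes
with every element of `I` (i.e. `m(s,t) = 2`), then
`N_W(W_J) ∩ N_W(W_I) ⊆ N_W(W_{J∖I})`. -/
theorem stmt_15 {B W : Type*} [Group W] {M : CoxeterMatrix B}
    (cs : CoxeterSystem M W) (I J : Set B) (hIJ : I ⊆ J)
    (hperp : ∀ s ∈ J \ I, ∀ t ∈ I, M s t = 2) :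
    Subgroup.normalizer (Subgroup.closure (cs.simple '' J) : Set W) ⊓
        Subgroup.normalizer (Subgroup.closure (cs.simple '' I) : Set W) ≤
      Subgroup.normalizer (Subgroup.closure (cs.simple '' (J \ I)) : Set W) := by
  rw [Subgroup.le_normalizer_closure_iff]
  rintro w ⟨hwJ, hwI⟩ _ ⟨i, hi, rfl⟩
  have ht : w * cs.simple i * w⁻¹ ∈ Subgroup.closure (cs.simple '' (J \ I ∪ I)) := by
    rw [Set.sdiff_union_of_subset hIJ]
    exact (hwJ _).mp (Subgroup.subset_closure ⟨i, hi.1, rfl⟩)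
  refine (((cs.isReflection_simple i).conj w).mem_closure_or_mem_closure hperp ht).resolve_right
    fun h => ?_
  exact hi.2 (cs.simple_mem_closure_iff.mp ((hwI _).mpr h))
end

section
/- Let G be a connected acyclic graph (a tree, with vertex set of arbitrary cardinality) in which every vertex has degree exactly 2. Then G is isomorphic to the two-way infinite path graph (vertex set ℤ, with i and j adjacent iff |i - j| = 1). -/
/-- The two-way infinite path graph on `ℤ`: `i` and `j` are adjacent iff
`|i - j| = 1`. -/
def pathZ : SimpleGraph ℤ := SimpleGraph.fromRel (fun i j => i + 1 = j)

/-
Every vertex has exactly two neighbours, so each dart `u → w` continues uniquely to the dart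
`w → w'` with `w'` the other neighbour of `w`; this is a permutation of the darts, and its orbit
through a fixed dart traces a bi-infinite non-backtracking walk `φ : ℤ → V`. In an acyclic
graph a non-backtracking walk is a path, so `φ` is injective; its image contains both neighbours
of each of its points, so by connectedness it is everything, and `φ` is an isomorphism from the
path on `ℤ`.
-/

namespace SimpleGraph

variable {V : Type*} {G : SimpleGraph V}

lemma Reachable.mem_of_adj_closed {s : Set V} (hs : ∀ x y, G.Adj x y → x ∈ s → y ∈ s)
    {u v : V} (huv : G.Reachable u v) (hu : u ∈ s) : v ∈ s := by
  obtain ⟨p⟩ := huv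
  induction p with
  | nil => exact hu
  | cons h _ ih => exact ih (hs _ _ h hu)

lemma neighborSet_eq_pair {w a b : V} (hw : (G.neighborSet w).ncard = 2) (ha : G.Adj w a)
    (hb : G.Adj w b) (hab : a ≠ b) : G.neighborSet w = {a, b} := by
  have hsub : {a, b} ⊆ G.neighborSet w := Set.insert_subset ha (Set.singleton_subset_iff.2 hb)
  refine (Set.eq_of_subset_of_ncard_le hsub ?_ (Set.finite_of_ncard_ne_zero ?_)).symm
  · rw [hw, Set.ncard_pair hab]
  · omega

section NonBacktracking

variable {ψ : ℕ → V}

def walkToZero (hψ : ∀ n, G.Adj (ψ n) (ψ (n + 1))) : (n : ℕ) → G.Walk (ψ n) (ψ 0)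
  | 0 => .nil
  | n + 1 => .cons (hψ n).symm (walkToZero hψ n)

lemma mem_support_walkToZero (hψ : ∀ n, G.Adj (ψ n) (ψ (n + 1))) {m n : ℕ} (hmn : m ≤ n) :
    ψ m ∈ (walkToZero hψ n).support := by
  induction n with
  | zero => simp [Nat.le_zero.1 hmn, walkToZero]
  | succ n ih =>
    rcases Nat.of_le_succ hmn with h | rfl
    · exact Walk.support_cons _ _ ▸ List.mem_cons_of_mem _ (ih h)
    · exact Walk.start_mem_support _

lemma IsAcyclic.isPath_walkToZero (hG : G.IsAcyclic) (hψ : ∀ n, G.Adj (ψ n) (ψ (n + 1)))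
    (hnb : ∀ n, ψ (n + 2) ≠ ψ n) (n : ℕ) : (walkToZero hψ n).IsPath := by
  induction n with
  | zero => exact .nil
  | succ n ih =>
    refine (Walk.cons_isPath_iff _ _).2 ⟨ih, fun hmem => ?_⟩
    have hsnd := hG.eq_snd_of_adj_start ih (hψ n) hmem
    cases n with
    | zero => exact (hψ 0).ne hsnd.symm
    | succ k => exact hnb k (by simpa [walkToZero] using hsnd)

lemma IsAcyclic.injective_of_nonbacktracking_nat (hG : G.IsAcyclic)
    (hψ : ∀ n, G.Adj (ψ n) (ψ (n + 1))) (hnb : ∀ n, ψ (n + 2) ≠ ψ n) : Function.Injective ψ := by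
  refine Function.Injective.of_lt_imp_ne fun m n hmn heq => ?_
  obtain ⟨k, rfl⟩ := Nat.exists_eq_add_of_lt hmn
  have hpath := hG.isPath_walkToZero hψ hnb (m + k + 1)
  rw [walkToZero, Walk.cons_isPath_iff] at hpath
  exact hpath.2 (heq ▸ mem_support_walkToZero hψ (Nat.le_add_right m k))

end NonBacktracking

lemma IsAcyclic.injective_of_nonbacktracking (hG : G.IsAcyclic) {φ : ℤ → V}
    (hφ : ∀ n, G.Adj (φ n) (φ (n + 1))) (hnb : ∀ n, φ (n + 2) ≠ φ n) : Function.Injective φ := by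
  refine Function.Injective.of_lt_imp_ne fun i j hij heq => ?_
  have hinj := hG.injective_of_nonbacktracking_nat (ψ := fun k : ℕ => φ (i + k))
    (fun k => by simpa [add_assoc] using hφ (i + k))
    (fun k => by simpa [add_assoc] using hnb (i + k))
  have hji : ((j - i).toNat : ℤ) = j - i := Int.toNat_of_nonneg (by omega)
  have : (0 : ℕ) = (j - i).toNat := hinj (by simpa [hji] using heq)
  omega

lemma Preconnected.nonempty_iso_pathZ (hG : G.Preconnected) {φ : ℤ → V}
    (hinj : Function.Injective φ) (hnbr : ∀ n, G.neighborSet (φ n) = {φ (n - 1), φ (n + 1)}) :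
    Nonempty (pathZ ≃g G) := by
  have hclosed (x y : V) (hxy : G.Adj x y) (hx : x ∈ Set.range φ) : y ∈ Set.range φ := by
    obtain ⟨m, rfl⟩ := hx
    rw [← mem_neighborSet, hnbr] at hxy
    rcases hxy with rfl | rfl
    exacts [⟨_, rfl⟩, ⟨_, rfl⟩]
  have hsurj : Function.Surjective φ := fun v => (hG (φ 0) v).mem_of_adj_closed hclosed ⟨0, rfl⟩
  refine ⟨⟨Equiv.ofBijective φ ⟨hinj, hsurj⟩, fun {m n} => ?_⟩⟩
  show G.Adj (φ m) (φ n) ↔ pathZ.Adj m n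
  rw [← mem_neighborSet, hnbr, Set.mem_insert_iff, Set.mem_singleton_iff, hinj.eq_iff,
    hinj.eq_iff, pathZ, fromRel_adj]
  omega

section DegreeTwo

variable (hdeg : ∀ v, (G.neighborSet v).ncard = 2)

noncomputable def nextDart (d : G.Dart) : G.Dart :=
  have hne := Set.exists_ne_of_one_lt_ncard (hdeg d.snd ▸ one_lt_two) d.fst
  ⟨(d.snd, hne.choose), hne.choose_spec.1⟩

lemma nextDart_fst (d : G.Dart) : (nextDart hdeg d).fst = d.snd := rfl

lemma nextDart_snd_ne (d : G.Dart) : (nextDart hdeg d).snd ≠ d.fst :=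
  (Set.exists_ne_of_one_lt_ncard (hdeg d.snd ▸ one_lt_two) d.fst).choose_spec.2

lemma symm_nextDart_symm_nextDart (d : G.Dart) :
    (nextDart hdeg (nextDart hdeg d).symm).symm = d := by
  set e := nextDart hdeg d
  have hnbr : G.neighborSet d.snd = {e.snd, d.fst} :=
    neighborSet_eq_pair (hdeg _) e.adj d.adj.symm (nextDart_snd_ne hdeg d)
  have hmem : (nextDart hdeg e.symm).snd ∈ G.neighborSet d.snd := (nextDart hdeg e.symm).adj
  rw [hnbr] at hmem
  have hback : (nextDart hdeg e.symm).snd = d.fst :=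
    hmem.resolve_left (nextDart_snd_ne hdeg e.symm)
  ext <;> simp [hback, nextDart_fst, e]

noncomputable def dartShift : Equiv.Perm G.Dart where
  toFun := nextDart hdeg
  invFun d := (nextDart hdeg d.symm).symm
  left_inv := symm_nextDart_symm_nextDart hdeg
  right_inv d := by simpa using congrArg Dart.symm (symm_nextDart_symm_nextDart hdeg d.symm)

lemma fst_dartShift_zpow_add_one (d : G.Dart) (n : ℤ) :
    ((dartShift hdeg ^ (n + 1)) d).fst = ((dartShift hdeg ^ n) d).snd := by
  rw [← mul_self_zpow, Equiv.Perm.mul_apply]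
  exact nextDart_fst hdeg _

lemma fst_dartShift_zpow_add_two_ne (d : G.Dart) (n : ℤ) :
    ((dartShift hdeg ^ (n + 2)) d).fst ≠ ((dartShift hdeg ^ n) d).fst := by
  rw [show n + 2 = n + 1 + 1 by ring, fst_dartShift_zpow_add_one, ← mul_self_zpow,
    Equiv.Perm.mul_apply]
  exact nextDart_snd_ne hdeg _

end DegreeTwo

end SimpleGraph

open SimpleGraph in
/-- A tree in which every vertex has degree exactly `2` is
isomorphic to the two-way infinite path graph on `ℤ`. -/
theorem stmt_19 {V : Type*} (G : SimpleGraph V) (htree : G.IsTree)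
    (hdeg : ∀ v : V, (G.neighborSet v).ncard = 2) :
    Nonempty (G ≃g pathZ) := by
  obtain ⟨hconn, hacyc⟩ := htree
  obtain ⟨v⟩ := hconn.nonempty
  obtain ⟨w, hvw, -⟩ := Set.exists_ne_of_one_lt_ncard (hdeg v ▸ one_lt_two) v
  set φ : ℤ → V := fun n => ((dartShift hdeg ^ n) ⟨(v, w), hvw⟩).fst
  have hφ (n : ℤ) : G.Adj (φ n) (φ (n + 1)) := by
    simp only [φ, fst_dartShift_zpow_add_one]
    exact Dart.adj _
  have hinj := hacyc.injective_of_nonbacktracking hφ (fst_dartShift_zpow_add_two_ne hdeg _)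
  have hnbr (n : ℤ) : G.neighborSet (φ n) = {φ (n - 1), φ (n + 1)} :=
    neighborSet_eq_pair (hdeg _) (by simpa using (hφ (n - 1)).symm) (hφ n) (hinj.ne (by omega))
  exact (hconn.preconnected.nonempty_iso_pathZ hinj hnbr).map Iso.symm
end
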